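/- Let d, n ≥ 1, μ, L, R > 0, let 𝒳 be a set, and let f : ℝ^d × 𝒳 → ℝ be such that for every x ∈ 𝒳 the function f(·,x) is μ-strongly convex on ℝ^d and L-Lipschitz on B(0,R). Let X, X' ∈ 𝒳ⁿ be adjacent datasets, and let ŵ(X), ŵ(X') ∈ B(0,R) be the minimizers over ℝ^d of the empirical losses w ↦ (1/n)·Σᵢ f(w,xᵢ) and w ↦ (1/n)·Σᵢ f(w,xᵢ'), respectively. Let Π_{B(0,R)} denote the Euclidean projection onto B(0,R). Then for every x ∈ 𝒳 and every z ∈ ℝ^d, f(Π_{B(0,R)}(ŵ(X) + z), x) − f(Π_{B(0,R)}(ŵ(X') + z), x) ≤ 2L²/(μn). (Hence output perturbation is (2L²/(μn))-uniformly stable.) -/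

import Mathlib

open scoped RealInnerProductSpace

/-- Euclidean projection onto the closed ball `B(0,R)`:
`Π(u) = u` if `‖u‖ ≤ R`, and `Π(u) = (R/‖u‖)·u` otherwise. -/
noncomputable def projBall {d : ℕ} (R : ℝ) (u : EuclideanSpace ℝ (Fin d)) :
    EuclideanSpace ℝ (Fin d) :=
  if ‖u‖ ≤ R then u else (R / ‖u‖) • u

lemma projBall_norm_le {d : ℕ} {R : ℝ} (hR : 0 ≤ R) (u : EuclideanSpace ℝ (Fin d)) :
    ‖projBall R u‖ ≤ R := by
  unfold projBall
  split
  · assumption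
  · rename_i h
    push_neg at h
    have hu : 0 < ‖u‖ := lt_of_le_of_lt hR h
    rw [norm_smul, Real.norm_eq_abs, abs_of_nonneg (div_nonneg hR hu.le)]
    field_simp
    exact le_rfl

lemma projBall_var {d : ℕ} {R : ℝ} (hR : 0 ≤ R) (u w : EuclideanSpace ℝ (Fin d))
    (hw : ‖w‖ ≤ R) : ⟪u - projBall R u, w - projBall R u⟫ ≤ 0 := by
  unfold projBall
  split
  · simp
  · rename_i h
    push_neg at h
    have hu : 0 < ‖u‖ := lt_of_le_of_lt hR h
    set c := R / ‖u‖ with hc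
    have hc1 : c ≤ 1 := by
      rw [hc, div_le_one hu]; exact h.le
    have hc0 : 0 ≤ c := div_nonneg hR hu.le
    have hiw : ⟪u, w⟫ ≤ c * ‖u‖ ^ 2 := by
      have := real_inner_le_norm u w
      have : ⟪u, w⟫ ≤ ‖u‖ * R := this.trans (by nlinarith [hu.le])
      rw [hc]
      rw [div_mul_eq_mul_div]
      rw [le_div_iff₀ hu] at *
      nlinarith [sq_nonneg ‖u‖]
    have expand : ⟪u - c • u, w - c • u⟫ = (1 - c) * (⟪u, w⟫ - c * ‖u‖ ^ 2) := by
      simp only [inner_sub_left, inner_sub_right, real_inner_smul_left, real_inner_smul_right,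
        real_inner_self_eq_norm_sq, real_inner_comm u w, norm_smul, Real.norm_eq_abs, mul_pow, sq_abs]
      ring
    rw [expand]
    nlinarith

lemma projBall_nonexpansive {d : ℕ} {R : ℝ} (hR : 0 ≤ R) (a b : EuclideanSpace ℝ (Fin d)) :
    ‖projBall R a - projBall R b‖ ≤ ‖a - b‖ := by
  set p := projBall R a
  set q := projBall R b
  have h1 : ⟪a - p, q - p⟫ ≤ 0 := projBall_var hR a q (projBall_norm_le hR b)
  have h2 : ⟪b - q, p - q⟫ ≤ 0 := projBall_var hR b p (projBall_norm_le hR a)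
  have key : ‖p - q‖ ^ 2 ≤ ⟪a - b, p - q⟫ := by
    have e : ⟪p - q, p - q⟫ = ⟪a - b, p - q⟫ + ⟪a - p, q - p⟫ + ⟪b - q, p - q⟫ := by
      simp only [inner_sub_left, inner_sub_right]
      have c1 := real_inner_comm a p
      have c2 := real_inner_comm a q
      have c3 := real_inner_comm b p
      have c4 := real_inner_comm b q
      have c5 := real_inner_comm p q
      linarith
    rw [← real_inner_self_eq_norm_sq]
    linarith [e, h1, h2]
  have hcs : ⟪a - b, p - q⟫ ≤ ‖a - b‖ * ‖p - q‖ := real_inner_le_norm _ _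
  rcases eq_or_lt_of_le (norm_nonneg (p - q)) with h0 | h0
  · rw [← h0]; exact norm_nonneg _
  · nlinarith

lemma combo_identity {E : Type*} [NormedAddCommGroup E] [InnerProductSpace ℝ E]
    (a b : E) (t : ℝ) :
    (1 - t) * ‖a‖ ^ 2 + t * ‖b‖ ^ 2 - ‖(1 - t) • a + t • b‖ ^ 2
      = t * (1 - t) * ‖b - a‖ ^ 2 := by
  simp only [← real_inner_self_eq_norm_sq, inner_add_left, inner_add_right,
    inner_sub_left, inner_sub_right, real_inner_smul_left, real_inner_smul_right,
    real_inner_comm b a]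
  ring

lemma strong_min {E : Type*} [NormedAddCommGroup E] [InnerProductSpace ℝ E]
    {μ : ℝ} (hμ : 0 < μ) (F : E → ℝ)
    (hg : ConvexOn ℝ Set.univ (fun w => F w - μ / 2 * ‖w‖ ^ 2))
    (w₀ u : E) (hmin : ∀ v, F w₀ ≤ F v) :
    F w₀ + μ / 2 * ‖u - w₀‖ ^ 2 ≤ F u := by
  set N := ‖u - w₀‖ ^ 2 with hN
  have hN0 : 0 ≤ N := sq_nonneg _
  -- step inequality for t ∈ (0,1]
  have step : ∀ t : ℝ, 0 < t → t ≤ 1 →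
      F w₀ + μ / 2 * (1 - t) * N ≤ F u := by
    intro t ht0 ht1
    have hconv := hg.2 (Set.mem_univ w₀) (Set.mem_univ u)
      (by linarith : (0:ℝ) ≤ 1 - t) ht0.le (by ring)
    simp only [smul_eq_mul] at hconv
    have hid := combo_identity w₀ u t
    have hm := hmin ((1 - t) • w₀ + t • u)
    have hid' := congrArg (fun r => μ / 2 * r) hid
    simp only [hN] at *
    ring_nf at hid' hconv hm
    have key : t * (F w₀ + μ / 2 * (1 - t) * ‖u - w₀‖ ^ 2) ≤ t * F u := by
      ring_nf
      linarith [hconv, hm, hid']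
    have := le_of_mul_le_mul_left key ht0
    linarith
  rcases eq_or_lt_of_le hN0 with h0 | h0
  · have := hmin u
    nlinarith
  · apply le_of_forall_pos_le_add
    intro ε hε
    have htpos : 0 < min 1 (2 * ε / (μ * N)) := by
      apply lt_min one_pos
      positivity
    have htle : min 1 (2 * ε / (μ * N)) ≤ 1 := min_le_left _ _
    have hs := step _ htpos htle
    have : μ / 2 * (min 1 (2 * ε / (μ * N))) * N ≤ ε := by
      have h1 : min 1 (2 * ε / (μ * N)) ≤ 2 * ε / (μ * N) := min_le_right _ _
      have h2 : μ / 2 * (2 * ε / (μ * N)) * N = ε := by field_simp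
      nlinarith
    nlinarith

lemma convexOn_finset_sum {E : Type*} [NormedAddCommGroup E] [InnerProductSpace ℝ E]
    {ι : Type*} (s : Finset ι) (g : ι → E → ℝ)
    (h : ∀ i ∈ s, ConvexOn ℝ Set.univ (g i)) :
    ConvexOn ℝ Set.univ (fun w => ∑ i ∈ s, g i w) := by
  classical
  induction s using Finset.induction_on with
  | empty => simpa using convexOn_const (0:ℝ) convex_univ
  | insert a s hnot ih =>
    simp only [Finset.sum_insert hnot]
    have h1 := h a (Finset.mem_insert_self a s)
    have h2 := ih (fun i hi => h i (Finset.mem_insert_of_mem hi))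
    exact h1.add h2


/-- Output perturbation is `(2L²/(μn))`-uniformly stable: for per-datum
`μ`-strongly convex, `L`-Lipschitz-on-`B(0,R)` losses, adjacent datasets `X, X'` with
empirical minimizers `ŵ(X), ŵ(X') ∈ B(0,R)`, every datum `x` and every noise vector `z`,
`f(Π(ŵ(X) + z), x) − f(Π(ŵ(X') + z), x) ≤ 2L²/(μn)`. -/
theorem stmt_15 (d n : ℕ) (hd : 1 ≤ d) (hn : 1 ≤ n)
    (μ L R : ℝ) (hμ : 0 < μ) (hL : 0 < L) (hR : 0 < R)
    {𝒳 : Type*} (f : EuclideanSpace ℝ (Fin d) → 𝒳 → ℝ)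
    (hsconv : ∀ x : 𝒳, ConvexOn ℝ Set.univ (fun w => f w x - μ / 2 * ‖w‖ ^ 2))
    (hLip : ∀ x : 𝒳, ∀ w ∈ Metric.closedBall (0 : EuclideanSpace ℝ (Fin d)) R,
      ∀ w' ∈ Metric.closedBall (0 : EuclideanSpace ℝ (Fin d)) R,
      |f w x - f w' x| ≤ L * ‖w - w'‖)
    (X X' : Fin n → 𝒳) (hadj : ∃ i : Fin n, ∀ j : Fin n, j ≠ i → X j = X' j)
    (whatX whatX' : EuclideanSpace ℝ (Fin d))
    (hwXmin : ∀ u, (1 / (n : ℝ)) * ∑ i, f whatX (X i) ≤ (1 / (n : ℝ)) * ∑ i, f u (X i))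
    (hwX'min : ∀ u, (1 / (n : ℝ)) * ∑ i, f whatX' (X' i) ≤ (1 / (n : ℝ)) * ∑ i, f u (X' i))
    (hwXB : ‖whatX‖ ≤ R) (hwX'B : ‖whatX'‖ ≤ R) :
    ∀ (x : 𝒳) (z : EuclideanSpace ℝ (Fin d)),
      f (projBall R (whatX + z)) x - f (projBall R (whatX' + z)) x ≤
        2 * L ^ 2 / (μ * n) := by
  obtain ⟨i₀, hi₀⟩ := hadj
  have hn0 : (0:ℝ) < n := by exact_mod_cast hn
  -- strong convexity of the two empirical losses
  have hconvF : ∀ Y : Fin n → 𝒳, ConvexOn ℝ Set.univ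
      (fun w => (1 / (n : ℝ)) * ∑ i, f w (Y i) - μ / 2 * ‖w‖ ^ 2) := by
    intro Y
    have hsum := convexOn_finset_sum Finset.univ
      (fun i (w : EuclideanSpace ℝ (Fin d)) => f w (Y i) - μ / 2 * ‖w‖ ^ 2)
      (fun i _ => hsconv (Y i))
    have hsmul := hsum.smul (show (0:ℝ) ≤ 1 / n by positivity)
    have hEq : (fun w : EuclideanSpace ℝ (Fin d) =>
        (1 / (n : ℝ)) • ∑ i, (f w (Y i) - μ / 2 * ‖w‖ ^ 2)) =
        (fun w => (1 / (n : ℝ)) * ∑ i, f w (Y i) - μ / 2 * ‖w‖ ^ 2) := by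
      funext w
      rw [smul_eq_mul, Finset.sum_sub_distrib, Finset.sum_const, Finset.card_univ,
        Fintype.card_fin, nsmul_eq_mul]
      field_simp
    rw [← hEq]
    exact hsmul
  have hFs := strong_min hμ (fun w => (1 / (n : ℝ)) * ∑ i, f w (X i)) (hconvF X)
    whatX whatX' hwXmin
  have hGs := strong_min hμ (fun w => (1 / (n : ℝ)) * ∑ i, f w (X' i)) (hconvF X')
    whatX' whatX hwX'min
  set D := ‖whatX - whatX'‖ with hDdef
  have hD0 : 0 ≤ D := norm_nonneg _
  have hrev : ‖whatX' - whatX‖ = D := norm_sub_rev _ _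
  -- cancellation of the sums
  have hsum_eq : ∑ i, ((f whatX' (X i) - f whatX (X i)) + (f whatX (X' i) - f whatX' (X' i)))
      = (f whatX' (X i₀) - f whatX (X i₀)) + (f whatX (X' i₀) - f whatX' (X' i₀)) := by
    apply Finset.sum_eq_single
    · intro j _ hj
      rw [hi₀ j hj]; ring
    · intro h; exact absurd (Finset.mem_univ i₀) h
  have hmemX : whatX ∈ Metric.closedBall (0 : EuclideanSpace ℝ (Fin d)) R :=
    mem_closedBall_zero_iff.mpr hwXB
  have hmemX' : whatX' ∈ Metric.closedBall (0 : EuclideanSpace ℝ (Fin d)) R :=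
    mem_closedBall_zero_iff.mpr hwX'B
  have hb1 : f whatX' (X i₀) - f whatX (X i₀) ≤ L * D := by
    have := (le_abs_self _).trans (hLip (X i₀) whatX' hmemX' whatX hmemX)
    rwa [hrev] at this
  have hb2 : f whatX (X' i₀) - f whatX' (X' i₀) ≤ L * D := by
    exact (le_abs_self _).trans (hLip (X' i₀) whatX hmemX whatX' hmemX')
  have hsum_le : (1 / (n : ℝ)) * ∑ i,
      ((f whatX' (X i) - f whatX (X i)) + (f whatX (X' i) - f whatX' (X' i)))
      ≤ (1 / (n : ℝ)) * (2 * L * D) := by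
    rw [hsum_eq]
    apply mul_le_mul_of_nonneg_left (by linarith) (by positivity)
  have hexpand : (1 / (n : ℝ)) * ∑ i,
      ((f whatX' (X i) - f whatX (X i)) + (f whatX (X' i) - f whatX' (X' i)))
      = ((1 / (n : ℝ)) * ∑ i, f whatX' (X i) - (1 / (n : ℝ)) * ∑ i, f whatX (X i))
        + ((1 / (n : ℝ)) * ∑ i, f whatX (X' i) - (1 / (n : ℝ)) * ∑ i, f whatX' (X' i)) := by
    simp only [Finset.sum_add_distrib, Finset.sum_sub_distrib]
    ring
  have key : μ * D ^ 2 ≤ (1 / (n : ℝ)) * (2 * L * D) := by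
    rw [hrev] at hFs
    calc μ * D ^ 2 = μ / 2 * D ^ 2 + μ / 2 * D ^ 2 := by ring
    _ ≤ _ := by
        rw [hexpand] at hsum_le
        linarith [hFs, hGs, hsum_le]
  have hD : D ≤ 2 * L / (μ * n) := by
    rcases eq_or_lt_of_le hD0 with h0 | h0
    · rw [← h0]; positivity
    · have key' : μ * n * D ^ 2 ≤ 2 * L * D := by
        calc μ * n * D ^ 2 = n * (μ * D ^ 2) := by ring
        _ ≤ n * ((1 / (n : ℝ)) * (2 * L * D)) := mul_le_mul_of_nonneg_left key hn0.le
        _ = 2 * L * D := by field_simp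
      rw [le_div_iff₀ (mul_pos hμ hn0)]
      nlinarith [key', h0]
  intro x z
  set p := projBall R (whatX + z) with hp
  set q := projBall R (whatX' + z) with hq
  have hpm : p ∈ Metric.closedBall (0 : EuclideanSpace ℝ (Fin d)) R :=
    mem_closedBall_zero_iff.mpr (projBall_norm_le hR.le _)
  have hqm : q ∈ Metric.closedBall (0 : EuclideanSpace ℝ (Fin d)) R :=
    mem_closedBall_zero_iff.mpr (projBall_norm_le hR.le _)
  have h1 : f p x - f q x ≤ L * ‖p - q‖ :=
    (le_abs_self _).trans (hLip x p hpm q hqm)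
  have h2 : ‖p - q‖ ≤ D := by
    have := projBall_nonexpansive hR.le (whatX + z) (whatX' + z)
    rwa [add_sub_add_right_eq_sub] at this
  calc f p x - f q x ≤ L * ‖p - q‖ := h1
  _ ≤ L * D := by nlinarith
  _ ≤ L * (2 * L / (μ * n)) := by nlinarith
  _ = 2 * L ^ 2 / (μ * n) := by ring
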